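/- arXiv:1008.2365 — 4 statements merged into one kernel-verified Lean document; each statement's English description precedes it below -/
import Mathlib

section
/- The composite ψ̃ ∘ φ̃ is the identity on the marked order polytope O(P,A)_λ. -/
open Finset Set

section Marked

variable {P : Type*} [PartialOrder P]

/-- A marked poset: `A` contains all extremal (minimal or maximal) elements of `P`. -/
def IsMarkedPoset (A : Set P) : Prop := ∀ p : P, IsMin p ∨ IsMax p → p ∈ A

/-- The marked order polytope `O(P,A)_λ ⊆ ℝ^{P-A}`. -/
def markedOrderPolytope (A : Set P) (lam : P → ℝ) : Set ({p : P // p ∉ A} → ℝ) :=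
  {x | (∀ p q : {p : P // p ∉ A}, (p : P) < (q : P) → x p ≤ x q) ∧
       (∀ a ∈ A, ∀ p : {p : P // p ∉ A}, a < (p : P) → lam a ≤ x p) ∧
       (∀ a ∈ A, ∀ p : {p : P // p ∉ A}, (p : P) < a → x p ≤ lam a)}

/-- The marked chain polytope `C(P,A)_λ ⊆ ℝ^{P-A}`. -/
def markedChainPolytope (A : Set P) (lam : P → ℝ) : Set ({p : P // p ∉ A} → ℝ) :=
  {x | (∀ p, 0 ≤ x p) ∧
       ∀ a ∈ A, ∀ b ∈ A, ∀ (k : ℕ) (c : Fin (k + 1) → {p : P // p ∉ A}),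
         StrictMono c → a < (c 0 : P) → (c (Fin.last k) : P) < b →
         ∑ i, x (c i) ≤ lam b - lam a}

/-- The transfer map `φ̃`: `φ̃(x)_p` is the minimum of `x_p - x_q` over covers `q ⋖ p`,
where `x_q` is read as `λ_q` when `q ∈ A`. -/
noncomputable def transferMap (A : Set P) (lam : P → ℝ)
    (x : {p : P // p ∉ A} → ℝ) : {p : P // p ∉ A} → ℝ := fun p =>
  sInf ({v | ∃ q : {p : P // p ∉ A}, (q : P) ⋖ (p : P) ∧ v = x p - x q} ∪
        {v | ∃ a ∈ A, a ⋖ (p : P) ∧ v = x p - lam a})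

open scoped Classical in
/-- The map `ψ`, defined recursively going up the poset:
`ψ(y)_p = λ_p` for `p ∈ A`, and `ψ(y)_p = y_p + max {ψ(y)_q : p ≻ q}` for `p ∉ A`. -/
noncomputable def psiFull [Finite P] (A : Set P) (lam : P → ℝ)
    (y : {p : P // p ∉ A} → ℝ) : P → ℝ :=
  WellFounded.fix wellFounded_lt (fun p ih =>
    if h : p ∈ A then lam p
    else y ⟨p, h⟩ + sSup {v | ∃ q, ∃ hq : q ⋖ p, v = ih q hq.lt})

/-- `ψ̃(y)`: the restriction of `ψ(y)` to the coordinates in `P - A`. -/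
noncomputable def psiTilde [Finite P] (A : Set P) (lam : P → ℝ)
    (y : {p : P // p ∉ A} → ℝ) : {p : P // p ∉ A} → ℝ :=
  fun p => psiFull A lam y p

end Marked


variable {P : Type*} [PartialOrder P]

/-!
For an unmarked `p`, `φ̃(x)_p` is `x_p` minus the maximum of `x` (read as `λ` on `A`) over the
lower covers of `p`; this maximum is over a nonempty finite set because unmarked elements are not
minimal. The recursion defining `ψ` adds exactly that maximum back, so by induction up the poset
`ψ(φ̃(x))` is `x` extended by `λ`.
-/

theorem exists_covBy_of_not_isMin {α : Type*} [PartialOrder α] [IsStronglyCoatomic α] {a : α}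
    (h : ¬IsMin a) : ∃ b, b ⋖ a := by
  obtain ⟨c, hc⟩ := not_isMin_iff.mp h
  obtain ⟨b, -, hb⟩ := exists_le_covBy_of_lt hc
  exact ⟨b, hb⟩

theorem Real.sInf_image_const_sub {S : Set ℝ} (hne : S.Nonempty) (hbdd : BddAbove S) (c : ℝ) :
    sInf ((c - ·) '' S) = c - sSup S :=
  (Antitone.map_csSup_of_continuousAt (by fun_prop) (fun _ _ h => sub_le_sub_left h c) hne
    hbdd).symm

open scoped Classical in
noncomputable def markedExtension {α : Type*} (A : Set α) (lam : α → ℝ) (x : {a : α // a ∉ A} → ℝ)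
    (a : α) : ℝ :=
  if h : a ∈ A then lam a else x ⟨a, h⟩

theorem markedExtension_of_mem {α : Type*} {A : Set α} {lam : α → ℝ} (x : {a : α // a ∉ A} → ℝ)
    {a : α} (ha : a ∈ A) : markedExtension A lam x a = lam a :=
  dif_pos ha

theorem markedExtension_of_notMem {α : Type*} {A : Set α} {lam : α → ℝ}
    (x : {a : α // a ∉ A} → ℝ) {a : α} (ha : a ∉ A) : markedExtension A lam x a = x ⟨a, ha⟩ :=
  dif_neg ha

section

variable {A : Set P} {lam : P → ℝ}

theorem transferMap_eq_sInf (x : {p : P // p ∉ A} → ℝ) (p : {p : P // p ∉ A}) :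
    transferMap A lam x p =
      sInf ((x p - ·) '' (markedExtension A lam x '' {q | q ⋖ (p : P)})) := by
  rw [transferMap, Set.image_image]
  congr 1
  ext v
  constructor
  · rintro (⟨q, hq, rfl⟩ | ⟨a, ha, hap, rfl⟩)
    · exact ⟨q, hq, by simp only [markedExtension_of_notMem x q.2]⟩
    · exact ⟨a, hap, by simp only [markedExtension_of_mem x ha]⟩
  · rintro ⟨q, hq, rfl⟩
    by_cases hqA : q ∈ A
    · exact Or.inr ⟨q, hqA, hq, by simp only [markedExtension_of_mem x hqA]⟩
    · exact Or.inl ⟨⟨q, hqA⟩, hq, by simp only [markedExtension_of_notMem x hqA]⟩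

theorem transferMap_eq_sub_sSup [Finite P] (x : {p : P // p ∉ A} → ℝ) (p : {p : P // p ∉ A})
    (hp : ¬IsMin (p : P)) :
    transferMap A lam x p = x p - sSup (markedExtension A lam x '' {q | q ⋖ (p : P)}) := by
  obtain ⟨q, hq⟩ := exists_covBy_of_not_isMin hp
  rw [transferMap_eq_sInf, Real.sInf_image_const_sub (Set.Nonempty.image _ ⟨q, hq⟩)
    (Set.toFinite _).bddAbove]

theorem psiFull_of_mem [Finite P] (y : {p : P // p ∉ A} → ℝ) {p : P} (hp : p ∈ A) :
    psiFull A lam y p = lam p := by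
  rw [psiFull, WellFounded.fix_eq, dif_pos hp]

theorem psiFull_of_notMem [Finite P] (y : {p : P // p ∉ A} → ℝ) {p : P} (hp : p ∉ A) :
    psiFull A lam y p = y ⟨p, hp⟩ + sSup (psiFull A lam y '' {q | q ⋖ p}) := by
  rw [psiFull, WellFounded.fix_eq, dif_neg hp]
  congr 2
  ext v
  simp only [Set.mem_image, exists_prop, eq_comm]
  rfl

theorem psiFull_transferMap [Finite P] (hA : IsMarkedPoset A) (x : {p : P // p ∉ A} → ℝ) :
    psiFull A lam (transferMap A lam x) = markedExtension A lam x := by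
  funext p
  induction p using WellFoundedLT.induction with
  | _ p ih =>
  by_cases hp : p ∈ A
  · rw [psiFull_of_mem _ hp, markedExtension_of_mem x hp]
  · have hmin : ¬IsMin p := fun h => hp (hA p (Or.inl h))
    have hcovers : psiFull A lam (transferMap A lam x) '' {q | q ⋖ p}
        = markedExtension A lam x '' {q | q ⋖ p} :=
      Set.image_congr fun q hq => ih q (CovBy.lt hq)
    rw [psiFull_of_notMem _ hp, hcovers, transferMap_eq_sub_sSup x ⟨p, hp⟩ hmin,
      markedExtension_of_notMem x hp, sub_add_cancel]

end

/-- `ψ̃ ∘ φ̃` is the identity on the marked order polytope. -/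
theorem psiTilde_transferMap [Fintype P] (A : Set P) (lam : P → ℝ)
    (hA : IsMarkedPoset A) :
    ∀ x ∈ markedOrderPolytope A lam, psiTilde A lam (transferMap A lam x) = x := by
  intro x _
  funext p
  rw [psiTilde, psiFull_transferMap hA, markedExtension_of_notMem x p.2]
end

section
/- If λ ∈ Z^A, then the marked order polytope O(P,A)_λ and the marked chain polytope C(P,A)_λ contain the same number of integer lattice points. -/
open Finset Set

/-
The lattice points of the two polytopes are matched by Stanley's transfer map, taken over all
lower elements instead of covers: `φ(x)_p = x_p - max {x_q, λ_a : q, a < p}`. It is a bijection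
of `ℝ^{P-A}` whose inverse `ψ` is built by recursion up the poset,
`ψ(y)_p = y_p + max {ψ(y)_q, λ_a : q, a < p}`. Telescoping along a chain shows that `φ` maps
`O(P,A)_λ` into `C(P,A)_λ`; conversely, following the elements at which the maxima defining
`ψ(y)_p` are attained produces a chain `a < p₁ < ⋯ < p` with `ψ(y)_p = λ_a + ∑ y_{pᵢ}`, so the
chain inequalities give `ψ(y)_p ≤ λ_b` for `p < b ∈ A`. Since each maximum is attained at one of
the values it is taken over, both maps preserve integrality when `λ` is integral.
-/

variable {P : Type*} [PartialOrder P]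

section Transfer

variable {A : Set P} {lam : P → ℝ}

def lowerValues (A : Set P) (lam : P → ℝ) (x : {p : P // p ∉ A} → ℝ) (p : {p : P // p ∉ A}) :
    Set ℝ :=
  lam '' (A ∩ Iio (p : P)) ∪ x '' Iio p

noncomputable def orderToChain (A : Set P) (lam : P → ℝ) (x : {p : P // p ∉ A} → ℝ) :
    {p : P // p ∉ A} → ℝ :=
  fun p => x p - sSup (lowerValues A lam x p)

noncomputable def chainToOrder [Finite P] (A : Set P) (lam : P → ℝ) (y : {p : P // p ∉ A} → ℝ) :
    {p : P // p ∉ A} → ℝ :=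
  wellFounded_lt.fix fun p ih =>
    y p + sSup (lam '' (A ∩ Iio (p : P)) ∪ range fun q : Iio p => ih q q.2)

theorem exists_mem_lt_of_isMarkedPoset [WellFoundedLT P] (hA : IsMarkedPoset A)
    (p : {p : P // p ∉ A}) : ∃ a ∈ A, a < (p : P) := by
  obtain ⟨m, hmp, hmin⟩ := exists_minimal_le_of_wellFoundedLT (fun _ => True) (p : P) trivial
  have hmA : m ∈ A := hA m (Or.inl (minimal_true.mp hmin))
  exact ⟨m, hmA, hmp.lt_of_ne fun h => p.2 (h ▸ hmA)⟩

section Finite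

variable [Finite P]

theorem lowerValues_finite (x : {p : P // p ∉ A} → ℝ) (p : {p : P // p ∉ A}) :
    (lowerValues A lam x p).Finite :=
  ((toFinite _).image lam).union ((toFinite _).image x)

theorem le_sSup_lowerValues {x : {p : P // p ∉ A} → ℝ} {p : {p : P // p ∉ A}} {v : ℝ}
    (hv : v ∈ lowerValues A lam x p) : v ≤ sSup (lowerValues A lam x p) :=
  le_csSup (lowerValues_finite x p).bddAbove hv

theorem sSup_lowerValues_mem (hA : IsMarkedPoset A) (x : {p : P // p ∉ A} → ℝ)
    (p : {p : P // p ∉ A}) : sSup (lowerValues A lam x p) ∈ lowerValues A lam x p := by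
  obtain ⟨a, ha, hap⟩ := exists_mem_lt_of_isMarkedPoset hA p
  exact Set.Nonempty.csSup_mem ⟨lam a, Or.inl ⟨a, ⟨ha, hap⟩, rfl⟩⟩ (lowerValues_finite x p)

theorem sSup_lowerValues_mem_addSubgroup (G : AddSubgroup ℝ) (hA : IsMarkedPoset A)
    (hlam : ∀ a ∈ A, lam a ∈ G) {x : {p : P // p ∉ A} → ℝ} {p : {p : P // p ∉ A}}
    (hx : ∀ q < p, x q ∈ G) : sSup (lowerValues A lam x p) ∈ G := by
  rcases sSup_lowerValues_mem hA x p with ⟨a, ⟨ha, -⟩, hv⟩ | ⟨q, hq, hv⟩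
  · exact hv ▸ hlam a ha
  · exact hv ▸ hx q hq

theorem orderToChain_le_sub {x : {p : P // p ∉ A} → ℝ} {p : {p : P // p ∉ A}} {v : ℝ}
    (hv : v ∈ lowerValues A lam x p) : orderToChain A lam x p ≤ x p - v :=
  sub_le_sub_left (le_sSup_lowerValues hv) _

theorem sum_orderToChain_le (x : {p : P // p ∉ A} → ℝ) {a : P} (ha : a ∈ A) :
    ∀ {k : ℕ} {c : Fin (k + 1) → {p : P // p ∉ A}}, StrictMono c → a < (c 0 : P) →
      ∑ i, orderToChain A lam x (c i) ≤ x (c (Fin.last k)) - lam a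
  | 0, c, _, hac => by
    simpa using orderToChain_le_sub (Or.inl ⟨a, ⟨ha, hac⟩, rfl⟩)
  | k + 1, c, hc, hac => by
    have hinit := sum_orderToChain_le x ha (hc.comp Fin.strictMono_castSucc) hac
    have hlast : orderToChain A lam x (c (Fin.last (k + 1))) ≤
        x (c (Fin.last (k + 1))) - x (c (Fin.last k).castSucc) :=
      orderToChain_le_sub (Or.inr ⟨_, hc (Fin.castSucc_lt_last _), rfl⟩)
    rw [Fin.sum_univ_castSucc]
    simp only [Function.comp_apply] at hinit
    linarith

theorem orderToChain_nonneg (hA : IsMarkedPoset A) {x : {p : P // p ∉ A} → ℝ}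
    (hx : x ∈ markedOrderPolytope A lam) (p : {p : P // p ∉ A}) : 0 ≤ orderToChain A lam x p := by
  obtain ⟨hmono, hlow, -⟩ := hx
  refine sub_nonneg.mpr ?_
  rcases sSup_lowerValues_mem hA x p with ⟨a, ⟨ha, hap⟩, hv⟩ | ⟨q, hq, hv⟩
  · exact hv ▸ hlow a ha p hap
  · exact hv ▸ hmono q p hq

theorem mapsTo_orderToChain (hA : IsMarkedPoset A) :
    MapsTo (orderToChain A lam) (markedOrderPolytope A lam) (markedChainPolytope A lam) := by
  intro x hx
  refine ⟨orderToChain_nonneg hA hx, fun a ha b hb k c hc hac hcb => ?_⟩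
  have htelescope := sum_orderToChain_le (lam := lam) x ha hc hac
  have htop := hx.2.2 b hb _ hcb
  linarith

theorem chainToOrder_eq (y : {p : P // p ∉ A} → ℝ) (p : {p : P // p ∉ A}) :
    chainToOrder A lam y p = y p + sSup (lowerValues A lam (chainToOrder A lam y) p) := by
  rw [chainToOrder, WellFounded.fix_eq, lowerValues, image_eq_range (s := Iio p)]

theorem orderToChain_chainToOrder (y : {p : P // p ∉ A} → ℝ) :
    orderToChain A lam (chainToOrder A lam y) = y := by
  funext p
  rw [orderToChain, chainToOrder_eq y p]
  ring

theorem chainToOrder_orderToChain (x : {p : P // p ∉ A} → ℝ) :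
    chainToOrder A lam (orderToChain A lam x) = x := by
  funext p
  induction p using WellFoundedLT.induction with
  | _ p ih =>
    have hlower : lowerValues A lam (chainToOrder A lam (orderToChain A lam x)) p =
        lowerValues A lam x p := by
      rw [lowerValues, lowerValues, image_congr (s := Iio p) fun q hq => ih q hq]
    rw [chainToOrder_eq, hlower, orderToChain]
    ring

theorem le_chainToOrder {y : {p : P // p ∉ A} → ℝ} {p : {p : P // p ∉ A}} {v : ℝ}
    (hy : 0 ≤ y p) (hv : v ∈ lowerValues A lam (chainToOrder A lam y) p) :
    v ≤ chainToOrder A lam y p := by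
  rw [chainToOrder_eq]
  linarith [le_sSup_lowerValues hv]

theorem exists_chain_chainToOrder_eq (hA : IsMarkedPoset A) (y : {p : P // p ∉ A} → ℝ)
    (p : {p : P // p ∉ A}) :
    ∃ (k : ℕ) (c : Fin (k + 1) → {p : P // p ∉ A}) (a : P), StrictMono c ∧ a ∈ A ∧
      a < (c 0 : P) ∧ c (Fin.last k) = p ∧ chainToOrder A lam y p = lam a + ∑ i, y (c i) := by
  induction p using WellFoundedLT.induction with
  | _ p ih =>
    rcases sSup_lowerValues_mem hA (chainToOrder A lam y) p with
      ⟨a, ⟨ha, hap⟩, hv⟩ | ⟨q, hqp, hv⟩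
    · refine ⟨0, fun _ => p, a, Fin.strictMono_iff_lt_succ.mpr fun i => i.elim0, ha, hap, rfl, ?_⟩
      rw [chainToOrder_eq, ← hv, Fin.sum_univ_one]
      ring
    · obtain ⟨k, c, a, hc, ha, hac, rfl, hsum⟩ := ih q hqp
      refine ⟨k + 1, Fin.snoc c p, a, ?_, ha, ?_, Fin.snoc_last .., ?_⟩
      · exact Fin.insertNth_last' p c ▸ Fin.strictMono_insertNth_last hc p hqp
      · rwa [← Fin.castSucc_zero, Fin.snoc_castSucc]
      · rw [chainToOrder_eq, ← hv, hsum, Fin.sum_univ_castSucc (n := k + 1)]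
        simp only [Fin.snoc_castSucc, Fin.snoc_last]
        ring

theorem mapsTo_chainToOrder (hA : IsMarkedPoset A) :
    MapsTo (chainToOrder A lam) (markedChainPolytope A lam) (markedOrderPolytope A lam) := by
  rintro y ⟨hnonneg, hchain⟩
  refine ⟨fun p q hpq => ?_, fun a ha p hap => ?_, fun b hb p hpb => ?_⟩
  · exact le_chainToOrder (hnonneg q) (Or.inr ⟨p, hpq, rfl⟩)
  · exact le_chainToOrder (hnonneg p) (Or.inl ⟨a, ⟨ha, hap⟩, rfl⟩)
  · obtain ⟨k, c, a, hc, ha, hac, rfl, hsum⟩ := exists_chain_chainToOrder_eq hA y p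
    linarith [hchain a ha b hb k c hc hac hpb]

theorem orderToChain_injective : Function.Injective (orderToChain A lam) :=
  Function.LeftInverse.injective chainToOrder_orderToChain

theorem invOn_chainToOrder_orderToChain (s t : Set ({p : P // p ∉ A} → ℝ)) :
    InvOn (chainToOrder A lam) (orderToChain A lam) s t :=
  ⟨fun x _ => chainToOrder_orderToChain x, fun y _ => orderToChain_chainToOrder y⟩

theorem bijOn_orderToChain (hA : IsMarkedPoset A) :
    BijOn (orderToChain A lam) (markedOrderPolytope A lam) (markedChainPolytope A lam) :=
  (invOn_chainToOrder_orderToChain _ _).bijOn (mapsTo_orderToChain hA) (mapsTo_chainToOrder hA)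

theorem bijOn_orderToChain_addSubgroup (G : AddSubgroup ℝ) (hA : IsMarkedPoset A)
    (hlam : ∀ a ∈ A, lam a ∈ G) :
    BijOn (orderToChain A lam) {x | ∀ p, x p ∈ G} {y | ∀ p, y p ∈ G} := by
  refine (invOn_chainToOrder_orderToChain _ _).bijOn (fun x hx p => ?_) (fun y hy p => ?_)
  · exact G.sub_mem (hx p) (sSup_lowerValues_mem_addSubgroup G hA hlam fun q _ => hx q)
  · induction p using WellFoundedLT.induction with
    | _ p ih =>
      rw [chainToOrder_eq]
      exact G.add_mem (hy p) (sSup_lowerValues_mem_addSubgroup G hA hlam ih)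

end Finite

end Transfer

/-- For integral markings, the marked order polytope and the marked chain polytope
contain the same number of integer lattice points. -/
theorem card_lattice_points_eq [Fintype P] (A : Set P) (lam : P → ℝ)
    (hA : IsMarkedPoset A) (hint : ∀ a ∈ A, ∃ z : ℤ, lam a = z) :
    (markedOrderPolytope A lam ∩ {x | ∀ p, ∃ z : ℤ, x p = (z : ℝ)}).ncard =
    (markedChainPolytope A lam ∩ {x | ∀ p, ∃ z : ℤ, x p = (z : ℝ)}).ncard := by
  have hpts : {x : {p : P // p ∉ A} → ℝ | ∀ p, ∃ z : ℤ, x p = z} =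
      {x | ∀ p, x p ∈ (Int.castAddHom ℝ).range} := by
    simp only [AddMonoidHom.mem_range, Int.coe_castAddHom, eq_comm]
  have hlam : ∀ a ∈ A, lam a ∈ (Int.castAddHom ℝ).range := by
    simpa only [AddMonoidHom.mem_range, Int.coe_castAddHom, eq_comm] using hint
  rw [hpts]
  exact ((bijOn_orderToChain hA).inter (bijOn_orderToChain_addSubgroup _ hA hlam)
    orderToChain_injective.injOn).ncard_eq
end

section
/- For every positive integer n, dilating the marking dilates the polytopes: O(P,A)_{nλ} = n·O(P,A)_λ and C(P,A)_{nλ} = n·C(P,A)_λ. Consequently, if λ ∈ Z^A, then for every n the number of lattice points in n·O(P,A)_λ equals the number of lattice points in n·C(P,A)_λ; i.e., the two polytopes have the same Ehrhart counting function. -/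
/-!
The defining inequalities of both polytopes are homogeneous of degree one in `(x, λ)`, so scaling
the marking by `n > 0` scales the polytopes by `n`.

For the lattice points, write `x̂ ∈ ℝ^P` for `x` extended by `λ` on `A`. The transfer map
`φ(x)_p = x_p - max_{q < p} x̂_q` sends `O(P,A)_λ` into `C(P,A)_λ`, since along a chain
`a < c₀ < ⋯ < c_k < b` the values of `φ(x)` telescope to at most `x_{c_k} - λ_a ≤ λ_b - λ_a`.
Its inverse is `ψ(y)_p = y_p + max_{q < p} ψ(y)_q` (with `ψ(y) = λ` on `A`). Following the
maximisers down, `ψ(y)_p` is `λ_a` plus the `y`-weight of a chain from `a` to `p`, which gives the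
upper bounds `ψ(y)_p ≤ λ_b` of the order polytope. Every maximum is attained, so for integral `λ`
both maps preserve integrality and `φ` restricts to a bijection between the lattice points.
-/

open Finset Set
open scoped Pointwise

section Dilation

variable {P : Type*} [PartialOrder P] (A : Set P) (lam : P → ℝ) {c : ℝ}

lemma eq_smul_set_of_smul_mem_iff {ι : Type*} {S T : Set (ι → ℝ)} (hc : c ≠ 0)
    (h : ∀ x, c • x ∈ S ↔ x ∈ T) : S = c • T := by
  ext x
  rw [mem_smul_set_iff_inv_smul_mem₀ hc, ← h, smul_inv_smul₀ hc]

lemma smul_mem_markedOrderPolytope_iff (hc : 0 < c) (x : {p : P // p ∉ A} → ℝ) :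
    c • x ∈ markedOrderPolytope A (fun a => c * lam a) ↔ x ∈ markedOrderPolytope A lam := by
  simp only [markedOrderPolytope, mem_ofPred_eq, Pi.smul_apply, smul_eq_mul,
    mul_le_mul_iff_right₀ hc]

lemma smul_mem_markedChainPolytope_iff (hc : 0 < c) (x : {p : P // p ∉ A} → ℝ) :
    c • x ∈ markedChainPolytope A (fun a => c * lam a) ↔ x ∈ markedChainPolytope A lam := by
  simp only [markedChainPolytope, mem_ofPred_eq, Pi.smul_apply, smul_eq_mul, ← Finset.mul_sum,
    ← mul_sub, mul_nonneg_iff_of_pos_left hc, mul_le_mul_iff_right₀ hc]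

lemma markedOrderPolytope_mul (hc : 0 < c) :
    markedOrderPolytope A (fun a => c * lam a) = c • markedOrderPolytope A lam :=
  eq_smul_set_of_smul_mem_iff hc.ne' (smul_mem_markedOrderPolytope_iff A lam hc)

lemma markedChainPolytope_mul (hc : 0 < c) :
    markedChainPolytope A (fun a => c * lam a) = c • markedChainPolytope A lam :=
  eq_smul_set_of_smul_mem_iff hc.ne' (smul_mem_markedChainPolytope_iff A lam hc)

end Dilation

lemma IsMarkedPoset.nonempty_Iio {P : Type*} [PartialOrder P] {A : Set P}
    (hA : IsMarkedPoset A) {p : P} (hp : p ∉ A) : (Set.Iio p).Nonempty :=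
  not_isMin_iff.1 fun h => hp (hA p (Or.inl h))

namespace MarkedPoset

open scoped Classical

variable {P : Type*} {A : Set P} {lam : P → ℝ}

noncomputable def extend (A : Set P) (lam : P → ℝ) (x : {p : P // p ∉ A} → ℝ) : P → ℝ :=
  fun p => if h : p ∈ A then lam p else x ⟨p, h⟩

@[simp]
lemma extend_of_mem (x : {p : P // p ∉ A} → ℝ) {a : P} (ha : a ∈ A) : extend A lam x a = lam a :=
  dif_pos ha

@[simp]
lemma extend_coe (x : {p : P // p ∉ A} → ℝ) (p : {p : P // p ∉ A}) : extend A lam x p = x p :=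
  dif_neg p.2

variable [PartialOrder P]

lemma extend_le_of_lt {x : {p : P // p ∉ A} → ℝ} (hx : x ∈ markedOrderPolytope A lam)
    {p : {p : P // p ∉ A}} {q : P} (hq : q < p) : extend A lam x q ≤ x p := by
  by_cases h : q ∈ A
  · rw [extend_of_mem x h]
    exact hx.2.1 q h p hq
  · exact (extend_coe x ⟨q, h⟩).trans_le (hx.1 ⟨q, h⟩ p hq)

/-- Unlike `transferMap`, this subtracts the maximum over all `q < p` rather than over the covers
of `p`: that keeps it a bijection `O(P,A)_λ → C(P,A)_λ` even when `λ` is not order-preserving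
on `A`. -/
noncomputable def orderToChain (A : Set P) (lam : P → ℝ) (x : {p : P // p ∉ A} → ℝ) :
    {p : P // p ∉ A} → ℝ :=
  fun p => x p - sSup (extend A lam x '' Set.Iio (p : P))

lemma orderToChain_nonneg (hA : IsMarkedPoset A) {x : {p : P // p ∉ A} → ℝ}
    (hx : x ∈ markedOrderPolytope A lam) (p : {p : P // p ∉ A}) : 0 ≤ orderToChain A lam x p :=
  sub_nonneg.2 <| csSup_le ((hA.nonempty_Iio p.2).image _) <| by
    rintro _ ⟨q, hq, rfl⟩
    exact extend_le_of_lt hx hq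

variable [Finite P]

lemma orderToChain_le_sub (x : {p : P // p ∉ A} → ℝ) {p : {p : P // p ∉ A}} {q : P}
    (hq : q < p) : orderToChain A lam x p ≤ x p - extend A lam x q :=
  sub_le_sub_left
    (le_csSup (toFinite _).bddAbove (Set.mem_image_of_mem _ (Set.mem_Iio.2 hq))) _

lemma sum_orderToChain_le (x : {p : P // p ∉ A} → ℝ) {a : P} (ha : a ∈ A) {k : ℕ}
    (c : Fin (k + 1) → {p : P // p ∉ A}) (hc : StrictMono c) (hac : a < c 0) :
    ∑ i, orderToChain A lam x (c i) ≤ x (c (Fin.last k)) - lam a := by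
  induction k with
  | zero => simpa [extend_of_mem x ha] using orderToChain_le_sub x hac
  | succ k ih =>
    have hinit := ih (c ∘ Fin.castSucc) (hc.comp Fin.strictMono_castSucc) hac
    have hlast := orderToChain_le_sub (lam := lam) x (hc (Fin.castSucc_lt_last (Fin.last k)))
    rw [Fin.sum_univ_castSucc]
    simp only [Function.comp_apply, extend_coe] at hinit hlast
    linarith

lemma orderToChain_mem_markedChainPolytope (hA : IsMarkedPoset A)
    {x : {p : P // p ∉ A} → ℝ} (hx : x ∈ markedOrderPolytope A lam) :
    orderToChain A lam x ∈ markedChainPolytope A lam := by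
  refine ⟨orderToChain_nonneg hA hx, fun a ha b hb k c hc hac hcb => ?_⟩
  linarith [sum_orderToChain_le (lam := lam) x ha c hc hac, hx.2.2 b hb _ hcb]

/-- As `psiFull`, but maximising over all `q < p`. -/
noncomputable def chainLift (A : Set P) (lam : P → ℝ) (y : {p : P // p ∉ A} → ℝ) :
    P → ℝ :=
  wellFounded_lt.fix fun p ih =>
    if h : p ∈ A then lam p else y ⟨p, h⟩ + sSup {v | ∃ q, ∃ hq : q < p, v = ih q hq}

noncomputable def chainToOrder (A : Set P) (lam : P → ℝ)
    (y : {p : P // p ∉ A} → ℝ) : {p : P // p ∉ A} → ℝ :=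
  fun p => chainLift A lam y p

lemma chainLift_of_mem (y : {p : P // p ∉ A} → ℝ) {a : P} (ha : a ∈ A) :
    chainLift A lam y a = lam a := by
  rw [chainLift, WellFounded.fix_eq, dif_pos ha]

lemma chainLift_of_notMem (y : {p : P // p ∉ A} → ℝ) {p : P} (hp : p ∉ A) :
    chainLift A lam y p = y ⟨p, hp⟩ + sSup (chainLift A lam y '' Set.Iio p) := by
  rw [chainLift, WellFounded.fix_eq, dif_neg hp]
  congr 2
  ext v
  exact ⟨fun ⟨q, hq, hv⟩ => ⟨q, hq, hv.symm⟩, fun ⟨q, hq, hv⟩ => ⟨q, hq, hv.symm⟩⟩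

lemma extend_chainToOrder (y : {p : P // p ∉ A} → ℝ) :
    extend A lam (chainToOrder A lam y) = chainLift A lam y := by
  funext p
  by_cases hp : p ∈ A
  · rw [extend_of_mem _ hp, chainLift_of_mem y hp]
  · exact extend_coe _ ⟨p, hp⟩

lemma orderToChain_chainToOrder (y : {p : P // p ∉ A} → ℝ) :
    orderToChain A lam (chainToOrder A lam y) = y := by
  funext p
  rw [orderToChain, extend_chainToOrder, chainToOrder, chainLift_of_notMem y p.2,
    add_sub_cancel_right]

lemma chainLift_orderToChain (x : {p : P // p ∉ A} → ℝ) :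
    chainLift A lam (orderToChain A lam x) = extend A lam x := by
  funext p
  induction p using WellFoundedLT.induction with
  | ind p ih =>
    by_cases hp : p ∈ A
    · rw [chainLift_of_mem _ hp, extend_of_mem _ hp]
    · rw [chainLift_of_notMem _ hp, Set.image_congr (s := Set.Iio p) ih, orderToChain,
        sub_add_cancel]
      exact (extend_coe x ⟨p, hp⟩).symm

lemma chainToOrder_orderToChain (x : {p : P // p ∉ A} → ℝ) :
    chainToOrder A lam (orderToChain A lam x) = x := by
  funext p
  rw [chainToOrder, chainLift_orderToChain, extend_coe]

lemma exists_chain_chainLift_eq (hA : IsMarkedPoset A) (y : {p : P // p ∉ A} → ℝ) {p : P}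
    (hp : p ∉ A) :
    ∃ a ∈ A, ∃ (k : ℕ) (c : Fin (k + 1) → {p : P // p ∉ A}), StrictMono c ∧ a < c 0 ∧
      c (Fin.last k) = ⟨p, hp⟩ ∧ chainLift A lam y p = lam a + ∑ i, y (c i) := by
  induction p using WellFoundedLT.induction with
  | ind p ih =>
  obtain ⟨q, hqp, hq⟩ := ((hA.nonempty_Iio hp).image (chainLift A lam y)).csSup_mem (toFinite _)
  rw [chainLift_of_notMem y hp, ← hq]
  by_cases hqA : q ∈ A
  · refine ⟨q, hqA, 0, fun _ => ⟨p, hp⟩, Fin.strictMono_iff_lt_succ.2 fun i => i.elim0, hqp,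
      rfl, ?_⟩
    rw [chainLift_of_mem y hqA, Fin.sum_univ_one, add_comm]
  · obtain ⟨a, ha, k, c, hc, hac, hcq, hq_eq⟩ := ih q hqp hqA
    refine ⟨a, ha, k + 1, Fin.snoc c ⟨p, hp⟩, ?_, ?_, Fin.snoc_last _ _, ?_⟩
    · rw [← Fin.insertNth_last']
      exact Fin.strictMono_insertNth_last hc _ (hcq ▸ hqp)
    · rwa [← Fin.castSucc_zero, Fin.snoc_castSucc]
    · rw [hq_eq, Fin.sum_univ_castSucc (n := k + 1)]
      simp only [Fin.snoc_castSucc, Fin.snoc_last]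
      ring

lemma chainLift_le_of_lt {y : {p : P // p ∉ A} → ℝ} (hy : ∀ p, 0 ≤ y p) {q : P}
    {p : {p : P // p ∉ A}} (hqp : q < p) : chainLift A lam y q ≤ chainLift A lam y p := by
  rw [chainLift_of_notMem y p.2]
  exact le_add_of_nonneg_of_le (hy p)
    (le_csSup (toFinite _).bddAbove (Set.mem_image_of_mem _ (Set.mem_Iio.2 hqp)))

lemma chainToOrder_mem_markedOrderPolytope (hA : IsMarkedPoset A) {y : {p : P // p ∉ A} → ℝ}
    (hy : y ∈ markedChainPolytope A lam) : chainToOrder A lam y ∈ markedOrderPolytope A lam := by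
  refine ⟨fun p q hpq => chainLift_le_of_lt hy.1 hpq, fun a ha p hap => ?_, fun b hb p hpb => ?_⟩
  · rw [← chainLift_of_mem (lam := lam) y ha]
    exact chainLift_le_of_lt hy.1 hap
  · obtain ⟨a, ha, k, c, hc, hac, hcp, hval⟩ := exists_chain_chainLift_eq (lam := lam) hA y p.2
    have hchain := hy.2 a ha b hb k c hc hac (hcp ▸ hpb)
    change chainLift A lam y p ≤ lam b
    linarith

lemma exists_int_orderToChain (hA : IsMarkedPoset A) (hlam : ∀ a ∈ A, ∃ z : ℤ, lam a = z)
    {x : {p : P // p ∉ A} → ℝ} (hx : ∀ p, ∃ z : ℤ, x p = z) (p : {p : P // p ∉ A}) :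
    ∃ z : ℤ, orderToChain A lam x p = z := by
  obtain ⟨q, -, hq⟩ := ((hA.nonempty_Iio p.2).image (extend A lam x)).csSup_mem (toFinite _)
  obtain ⟨n, hn⟩ : ∃ n : ℤ, extend A lam x q = n := by
    by_cases hqA : q ∈ A
    · rw [extend_of_mem x hqA]
      exact hlam q hqA
    · obtain ⟨n, hn⟩ := hx ⟨q, hqA⟩
      exact ⟨n, (extend_coe x ⟨q, hqA⟩).trans hn⟩
  obtain ⟨m, hm⟩ := hx p
  exact ⟨m - n, by rw [orderToChain, ← hq, hm, hn, Int.cast_sub]⟩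

lemma exists_int_chainToOrder (hA : IsMarkedPoset A) (hlam : ∀ a ∈ A, ∃ z : ℤ, lam a = z)
    {y : {p : P // p ∉ A} → ℝ} (hy : ∀ p, ∃ z : ℤ, y p = z) (p : {p : P // p ∉ A}) :
    ∃ z : ℤ, chainToOrder A lam y p = z := by
  choose f hf using hy
  obtain ⟨a, ha, k, c, -, -, -, hval⟩ := exists_chain_chainLift_eq (lam := lam) hA y p.2
  obtain ⟨m, hm⟩ := hlam a ha
  exact ⟨m + ∑ i, f (c i), by simp [chainToOrder, hval, hm, hf]⟩

lemma bijOn_orderToChain (hA : IsMarkedPoset A) (hlam : ∀ a ∈ A, ∃ z : ℤ, lam a = z) :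
    BijOn (orderToChain A lam) (markedOrderPolytope A lam ∩ {x | ∀ p, ∃ z : ℤ, x p = z})
      (markedChainPolytope A lam ∩ {y | ∀ p, ∃ z : ℤ, y p = z}) :=
  InvOn.bijOn (f' := chainToOrder A lam)
    ⟨fun x _ => chainToOrder_orderToChain x, fun y _ => orderToChain_chainToOrder y⟩
    (fun _ hx => ⟨orderToChain_mem_markedChainPolytope hA hx.1,
      exists_int_orderToChain hA hlam hx.2⟩)
    (fun _ hy => ⟨chainToOrder_mem_markedOrderPolytope hA hy.1,
      exists_int_chainToOrder hA hlam hy.2⟩)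

end MarkedPoset

variable {P : Type*} [PartialOrder P]

/-- Dilating the marking dilates both polytopes; consequently, for integral markings,
the dilates `n·O(P,A)_λ` and `n·C(P,A)_λ` contain the same number of integer lattice
points for every positive integer `n` (the same Ehrhart counting function). -/
theorem marked_polytopes_dilation_and_ehrhart [Fintype P] (A : Set P) (lam : P → ℝ)
    (hA : IsMarkedPoset A) :
    (∀ n : ℕ, 0 < n →
      markedOrderPolytope A (fun a => (n : ℝ) * lam a) =
        (n : ℝ) • markedOrderPolytope A lam ∧
      markedChainPolytope A (fun a => (n : ℝ) * lam a) =
        (n : ℝ) • markedChainPolytope A lam) ∧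
    ((∀ a ∈ A, ∃ z : ℤ, lam a = z) → ∀ n : ℕ, 0 < n →
      (((n : ℝ) • markedOrderPolytope A lam) ∩ {x | ∀ p, ∃ z : ℤ, x p = (z : ℝ)}).ncard =
      (((n : ℝ) • markedChainPolytope A lam) ∩ {x | ∀ p, ∃ z : ℤ, x p = (z : ℝ)}).ncard) := by
  refine ⟨fun n hn => ⟨markedOrderPolytope_mul A lam (Nat.cast_pos.2 hn),
    markedChainPolytope_mul A lam (Nat.cast_pos.2 hn)⟩, fun hlam n hn => ?_⟩
  rw [← markedOrderPolytope_mul A lam (Nat.cast_pos.2 hn),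
    ← markedChainPolytope_mul A lam (Nat.cast_pos.2 hn)]
  refine (MarkedPoset.bijOn_orderToChain hA fun a ha => ?_).ncard_eq
  obtain ⟨z, hz⟩ := hlam a ha
  exact ⟨n * z, by simp [hz]⟩
end

section
/- The integrality compatibility of the transfer map fails for non-integral markings: there exists a marked poset (P,A,λ) with λ ∈ R^A \ Z^A such that the number of integer lattice points in O(P,A)_λ differs from the number in C(P,A)_λ. -/
open Finset Set

/-! On the chain `0 < 1 < 2` marked at its ends, the marked order polytope is the segment
`[λ₀, λ₂]` and the marked chain polytope is `[0, λ₂ - λ₀]`, its translate by `-λ₀`. An integral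
translation preserves lattice points, but for `λ₀ = -1/2`, `λ₂ = 1/2` the first segment contains
only the integer `0`, the second both `0` and `1`. -/

lemma ncard_Icc_inter_range_intCast (a b : ℝ) :
    (Icc a b ∩ range ((↑) : ℤ → ℝ)).ncard = (⌊b⌋ + 1 - ⌈a⌉).toNat := by
  have hImage : Icc a b ∩ range ((↑) : ℤ → ℝ) = (↑) '' Icc ⌈a⌉ ⌊b⌋ := by
    ext t
    simp only [Set.mem_inter_iff, Set.mem_Icc, Set.mem_range, Set.mem_image, Int.ceil_le,
      Int.le_floor]
    constructor
    · rintro ⟨ht, z, rfl⟩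
      exact ⟨z, ht, rfl⟩
    · rintro ⟨z, hz, rfl⟩
      exact ⟨hz, z, rfl⟩
  rw [hImage, ncard_image_of_injective _ Int.cast_injective, ncard_eq_toFinset_card',
    toFinset_Icc, Int.card_Icc]

lemma ncard_preimage_eval_default_inter_integral {ι : Type*} [Unique ι] (S : Set ℝ) :
    ((fun x : ι → ℝ => x default) ⁻¹' S ∩ {x | ∀ p, ∃ z : ℤ, x p = z}).ncard =
      (S ∩ range ((↑) : ℤ → ℝ)).ncard := by
  have hPre : (fun x : ι → ℝ => x default) ⁻¹' S ∩ {x | ∀ p, ∃ z : ℤ, x p = z} =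
      Equiv.funUnique ι ℝ ⁻¹' (S ∩ range ((↑) : ℤ → ℝ)) := by
    ext x
    simp [Unique.forall_iff, eq_comm]
  rw [hPre, ncard_preimage_of_injective_subset_range (Equiv.injective _)]
  simp

lemma Fin.eq_zero_of_strictMono_subsingleton {α : Type*} [Preorder α] [Subsingleton α] {k : ℕ}
    {c : Fin (k + 1) → α} (hc : StrictMono c) : k = 0 := by
  by_contra hk
  have : NeZero k := ⟨hk⟩
  exact (hc (Fin.last_pos' : (0 : Fin (k + 1)) < Fin.last k)).ne (Subsingleton.elim _ _)

namespace ThreeChain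

abbrev ends : Set (Fin 3) := {0, 2}

abbrev Middle : Type := {p : Fin 3 // p ∉ ends}

instance : Unique Middle where
  default := ⟨1, by decide⟩
  uniq := by
    rintro ⟨p, hp⟩
    obtain rfl : p = 1 := by
      simp only [Set.mem_insert_iff, Set.mem_singleton_iff, not_or] at hp
      omega
    rfl

lemma coe_middle (p : Middle) : (p : Fin 3) = 1 := by
  rw [Unique.eq_default p]
  rfl

lemma isMarkedPoset_ends : IsMarkedPoset ends := by
  intro p hp
  fin_cases p
  · simp
  · exfalso
    rcases hp with h | h
    · exact absurd (h (show (0 : Fin 3) ≤ 1 by decide)) (by decide)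
    · exact absurd (h (show (1 : Fin 3) ≤ 2 by decide)) (by decide)
  · simp

variable (lam : Fin 3 → ℝ)

lemma markedOrderPolytope_eq :
    markedOrderPolytope ends lam = (fun x : Middle → ℝ => x default) ⁻¹' Icc (lam 0) (lam 2) := by
  ext x
  simp [markedOrderPolytope, coe_middle, Unique.forall_iff]

lemma markedChainPolytope_eq :
    markedChainPolytope ends lam =
      (fun x : Middle → ℝ => x default) ⁻¹' Icc 0 (lam 2 - lam 0) := by
  ext x
  constructor
  · rintro ⟨hnonneg, hchain⟩
    refine ⟨hnonneg default, ?_⟩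
    simpa using hchain 0 (by simp) 2 (by simp) 0 (fun _ => default)
      (Subsingleton.strictMono (α := Fin 1) _) (by decide) (by decide)
  · rintro ⟨hnonneg, hle⟩
    refine ⟨fun p => Unique.eq_default p ▸ hnonneg, fun a ha b hb k c hc hac hcb => ?_⟩
    obtain rfl := Fin.eq_zero_of_strictMono_subsingleton hc
    rw [coe_middle] at hac hcb
    obtain rfl | rfl := ha <;> [skip; exact absurd hac (by decide)]
    obtain rfl | rfl := hb <;> [exact absurd hcb (by decide); skip]
    simpa [Unique.eq_default (c 0)] using hle

end ThreeChain

/-- The lattice-point compatibility fails for non-integral markings: there is a marked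
poset with real, non-integral marking whose marked order and chain polytopes contain
different numbers of integer lattice points. -/
theorem exists_nonintegral_marking_lattice_counts_differ :
    ∃ (P : Type) (ipo : PartialOrder P) (_ : Fintype P) (A : Set P) (lam : P → ℝ),
      (@IsMarkedPoset P ipo A) ∧ ¬ (∀ a ∈ A, ∃ z : ℤ, lam a = z) ∧
      ((@markedOrderPolytope P ipo A lam) ∩
          {x | ∀ p, ∃ z : ℤ, x p = (z : ℝ)}).ncard ≠
      ((@markedChainPolytope P ipo A lam) ∩
          {x | ∀ p, ∃ z : ℤ, x p = (z : ℝ)}).ncard := by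
  refine ⟨Fin 3, inferInstance, inferInstance, ThreeChain.ends, ![-1/2, 0, 1/2],
    ThreeChain.isMarkedPoset_ends, fun hIntegral => ?_, ?_⟩
  · obtain ⟨z, hz⟩ := hIntegral 0 (by simp)
    -- `z` would equal both `⌊-1/2⌋ = -1` and `⌈-1/2⌉ = 0`.
    have hFloor := congrArg Int.floor hz
    have hCeil := congrArg Int.ceil hz
    norm_num at hFloor hCeil
    omega
  · rw [ThreeChain.markedOrderPolytope_eq, ThreeChain.markedChainPolytope_eq,
      ncard_preimage_eval_default_inter_integral, ncard_preimage_eval_default_inter_integral,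
      ncard_Icc_inter_range_intCast, ncard_Icc_inter_range_intCast]
    norm_num [Matrix.cons_val_two]
    decide
end
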